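/- Let α ∈ (-1,1), p ∈ (1,∞), and β ∈ (-α-1, (α+1)(p-1)). Then the weight ω(y) = y^β on (0,∞) belongs to the Muckenhoupt class A_p((0,∞), μ) with respect to the measure μ(dy) = y^α dy; that is, sup over intervals I ⊂ (0,∞) of ( μ(I)^{-1} ∫_I y^β μ(dy) ) · ( μ(I)^{-1} ∫_I y^{-β/(p-1)} μ(dy) )^{p-1} is finite. -/

import Mathlib

open MeasureTheory Real Set

/-! Both integrals are explicit: `∫_a^b y^(γ+α) dy = (b^(γ+α+1) - a^(γ+α+1)) / (γ+α+1)`.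
With `s = a/b ∈ [0,1)`, the map `u ↦ (1 - s^u)/u` is decreasing (Bernoulli's inequality) and
`u ↦ 1 - s^u` is increasing, so the `μ`-average of `y^γ` over `(a,b)` is at most a constant
(independent of `a, b`) times `b^γ`. For `γ = β` and `γ = -β/(p-1)` the factors `b^β` and
`(b^(-β/(p-1)))^(p-1) = b^(-β)` cancel. -/

lemma one_sub_rpow_div_le_of_le {s u v : ℝ} (hs : 0 ≤ s) (hv : 0 < v) (hvu : v ≤ u) :
    (1 - s ^ u) / u ≤ (1 - s ^ v) / v := by
  have hu : 0 < u := hv.trans_le hvu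
  have hB := one_add_mul_self_le_rpow_one_add (s := s ^ v - 1)
    (by linarith [rpow_nonneg hs v]) ((one_le_div hv).mpr hvu)
  rw [add_sub_cancel, ← rpow_mul hs, mul_div_cancel₀ _ hv.ne'] at hB
  rw [div_le_div_iff₀ hu hv]
  have hBv := mul_le_mul_of_nonneg_left hB hv.le
  rw [mul_add, ← mul_assoc, mul_div_cancel₀ _ hv.ne'] at hBv
  linarith

lemma one_sub_rpow_div_le_max {s u v : ℝ} (hs₀ : 0 ≤ s) (hs₁ : s ≤ 1) (hu : 0 < u) (hv : 0 < v) :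
    (1 - s ^ u) / u ≤ max 1 (v / u) * ((1 - s ^ v) / v) := by
  have hnn : 0 ≤ (1 - s ^ v) / v := div_nonneg (sub_nonneg.2 (rpow_le_one hs₀ hs₁ hv.le)) hv.le
  rcases le_total v u with hvu | huv
  · calc (1 - s ^ u) / u ≤ (1 - s ^ v) / v := one_sub_rpow_div_le_of_le hs₀ hv hvu
      _ ≤ max 1 (v / u) * ((1 - s ^ v) / v) := le_mul_of_one_le_left hnn (le_max_left _ _)
  · calc (1 - s ^ u) / u ≤ (1 - s ^ v) / u :=
          div_le_div_of_nonneg_right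
            (sub_le_sub_left (rpow_le_rpow_of_exponent_ge' hs₀ hs₁ hu.le huv) 1) hu.le
      _ = v / u * ((1 - s ^ v) / v) := by field_simp
      _ ≤ max 1 (v / u) * ((1 - s ^ v) / v) := by gcongr; exact le_max_right _ _

lemma rpow_sub_rpow_div_le {a b c d : ℝ} (ha : 0 ≤ a) (hab : a < b) (hc : 0 < c) (hd : 0 < d) :
    (b ^ c - a ^ c) / c ≤ max 1 (d / c) * b ^ (c - d) * ((b ^ d - a ^ d) / d) := by
  have hb : 0 < b := ha.trans_lt hab
  have hscale : ∀ e, (b ^ e - a ^ e) / e = b ^ e * ((1 - (a / b) ^ e) / e) := by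
    intro e
    rw [div_rpow ha hb.le]
    field_simp
  rw [hscale c, hscale d, rpow_sub hb]
  calc b ^ c * ((1 - (a / b) ^ c) / c)
      ≤ b ^ c * (max 1 (d / c) * ((1 - (a / b) ^ d) / d)) := by
        gcongr
        exact one_sub_rpow_div_le_max (by positivity) ((div_le_one hb).2 hab.le) hc hd
    _ = max 1 (d / c) * (b ^ c / b ^ d) * (b ^ d * ((1 - (a / b) ^ d) / d)) := by
        field_simp

lemma setIntegral_Ioo_rpow {a b c : ℝ} (hc : -1 < c) (hab : a ≤ b) :
    ∫ y in Ioo a b, y ^ c = (b ^ (c + 1) - a ^ (c + 1)) / (c + 1) := by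
  rw [← integral_Ioc_eq_integral_Ioo, ← intervalIntegral.integral_of_le hab,
    integral_rpow (Or.inl hc)]

lemma setIntegral_Ioo_rpow_mul_rpow {a b γ α : ℝ} (ha : 0 ≤ a) (hab : a ≤ b)
    (hγα : -1 < γ + α) :
    ∫ y in Ioo a b, y ^ γ * y ^ α = (b ^ (γ + α + 1) - a ^ (γ + α + 1)) / (γ + α + 1) := by
  rw [setIntegral_congr_fun measurableSet_Ioo
    (fun y hy => (rpow_add (ha.trans_lt hy.1) γ α).symm), setIntegral_Ioo_rpow hγα hab]

lemma setIntegral_Ioo_rpow_mul_rpow_div_le {a b γ α : ℝ} (ha : 0 ≤ a) (hab : a < b)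
    (hα : -1 < α) (hγα : -1 < γ + α) :
    (∫ y in Ioo a b, y ^ γ * y ^ α) / (∫ y in Ioo a b, y ^ α) ≤
      max 1 ((α + 1) / (γ + α + 1)) * b ^ γ := by
  have hα' : 0 < α + 1 := by linarith
  have hden : 0 < (b ^ (α + 1) - a ^ (α + 1)) / (α + 1) :=
    div_pos (sub_pos.2 (rpow_lt_rpow ha hab hα')) hα'
  rw [setIntegral_Ioo_rpow_mul_rpow ha hab.le hγα, setIntegral_Ioo_rpow hα hab.le,
    div_le_iff₀ hden]
  have key := rpow_sub_rpow_div_le ha hab (by linarith : 0 < γ + α + 1) hα'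
  rwa [show γ + α + 1 - (α + 1) = γ by ring] at key

/-- the power weight `y^β` belongs to the Muckenhoupt class
`A_p((0,∞), μ)` with `μ(dy) = y^α dy`, when `β ∈ (-α-1, (α+1)(p-1))`: the
`A_p` product over all intervals `I = (a,b) ⊂ (0,∞)` is uniformly bounded. -/
theorem power_weight_Ap (α p β : ℝ) (hα : α ∈ Set.Ioo (-1 : ℝ) 1) (hp : 1 < p)
    (hβ : β ∈ Set.Ioo (-α - 1) ((α + 1) * (p - 1))) :
    ∃ C : ℝ, ∀ a b : ℝ, 0 ≤ a → a < b →
      ((∫ y in Set.Ioo a b, y ^ β * y ^ α) / (∫ y in Set.Ioo a b, y ^ α)) *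
        ((∫ y in Set.Ioo a b, y ^ (-(β / (p - 1))) * y ^ α) /
          (∫ y in Set.Ioo a b, y ^ α)) ^ (p - 1) ≤ C := by
  obtain ⟨hα, -⟩ := hα
  obtain ⟨hβ₁, hβ₂⟩ := hβ
  have hq : 0 < p - 1 := by linarith
  have hβ' : -1 < -(β / (p - 1)) + α := by
    have : β / (p - 1) < α + 1 := (div_lt_iff₀ hq).2 hβ₂
    linarith
  refine ⟨max 1 ((α + 1) / (β + α + 1)) *
    max 1 ((α + 1) / (-(β / (p - 1)) + α + 1)) ^ (p - 1), fun a b ha hab => ?_⟩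
  have hb : 0 < b := ha.trans_lt hab
  have hnonneg : ∀ γ : ℝ, 0 ≤ (∫ y in Ioo a b, y ^ γ * y ^ α) / (∫ y in Ioo a b, y ^ α) :=
    fun γ => div_nonneg
      (setIntegral_nonneg measurableSet_Ioo fun y hy =>
        have hy0 := ha.trans hy.1.le; mul_nonneg (rpow_nonneg hy0 γ) (rpow_nonneg hy0 α))
      (setIntegral_nonneg measurableSet_Ioo fun y hy => rpow_nonneg (ha.trans hy.1.le) α)
  have h₁ := setIntegral_Ioo_rpow_mul_rpow_div_le ha hab hα (by linarith : -1 < β + α)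
  have h₂ := rpow_le_rpow (hnonneg _) (setIntegral_Ioo_rpow_mul_rpow_div_le ha hab hα hβ') hq.le
  rw [mul_rpow (by positivity) (by positivity), ← rpow_mul hb.le,
    neg_mul, div_mul_cancel₀ _ hq.ne'] at h₂
  calc _ ≤ max 1 ((α + 1) / (β + α + 1)) * b ^ β *
        (max 1 ((α + 1) / (-(β / (p - 1)) + α + 1)) ^ (p - 1) * b ^ (-β)) :=
        mul_le_mul h₁ h₂ (rpow_nonneg (hnonneg _) _) (by positivity)
    _ = _ := by
        rw [rpow_neg hb.le]
        field_simp
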